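/- There exist two single-follower 2×2 games (shared leader action set) such that the sum of the individual precise Stackelberg values (with leader-favorable tie-breaking) is 8, while in the combined two-follower game the leader's pessimistic value under the fully ambiguous commitment Δ(A_L) is 10. Concretely: follower payoffs F1 = (5,2;0,2), F2 = (2,0;2,5); leader payoffs against F1 = (0,10;0,0) and against F2 = (0,0;10,0) (rows are leader actions, columns follower actions). Under full ambiguity, F1's maximin response is its second action and F2's maximin response is its first action, yielding leader payoff 10 for every leader mixed strategy. -/

import Mathlib

/-!
In each single-follower game one follower action pays the follower a constant `2`, while the
other pays `5(1 - p)` (resp. `5p`). The leader earns `10(1 - p)` (resp. `10p`) only when the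
follower takes the constant action, which is a best response only for `p ≥ 3/5`
(resp. `p ≤ 2/5`); so each precise Stackelberg value is `4`. Under full ambiguity the constant
action guarantees `2`, whereas every mixture is driven down to at most `2` by a suitable leader
strategy (`p = 1`, resp. `p = 0`), so the constant actions are maximin. Against them the leader
receives `10(1 - p) + 10p = 10` whatever `p` is.
-/

/-- Follower 1's payoffs (rows = leader actions, columns = follower actions). -/
noncomputable def UB1 : Fin 2 → Fin 2 → ℝ := ![![5, 2], ![0, 2]]

/-- Follower 2's payoffs. -/
noncomputable def UB2 : Fin 2 → Fin 2 → ℝ := ![![2, 0], ![2, 5]]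

/-- Leader's payoffs against follower 1. -/
noncomputable def LB1 : Fin 2 → Fin 2 → ℝ := ![![0, 10], ![0, 0]]

/-- Leader's payoffs against follower 2. -/
noncomputable def LB2 : Fin 2 → Fin 2 → ℝ := ![![0, 0], ![10, 0]]

/-- Expected payoff of pure column `b` against leader mixture `p` (prob. of second row). -/
noncomputable def Epay (M : Fin 2 → Fin 2 → ℝ) (p : ℝ) (b : Fin 2) : ℝ :=
  (1 - p) * M 0 b + p * M 1 b

open Set

section Payoffs

variable (p : ℝ)

@[simp] lemma Epay_UB1_zero : Epay UB1 p 0 = 5 * (1 - p) := by simp [Epay, UB1]; ring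
@[simp] lemma Epay_UB1_one : Epay UB1 p 1 = 2 := by simp [Epay, UB1]; ring
@[simp] lemma Epay_UB2_zero : Epay UB2 p 0 = 2 := by simp [Epay, UB2]; ring
@[simp] lemma Epay_UB2_one : Epay UB2 p 1 = 5 * p := by simp [Epay, UB2]; ring
@[simp] lemma Epay_LB1_zero : Epay LB1 p 0 = 0 := by simp [Epay, LB1]
@[simp] lemma Epay_LB1_one : Epay LB1 p 1 = 10 * (1 - p) := by simp [Epay, LB1]; ring
@[simp] lemma Epay_LB2_zero : Epay LB2 p 0 = 10 * p := by simp [Epay, LB2]; ring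
@[simp] lemma Epay_LB2_one : Epay LB2 p 1 = 0 := by simp [Epay, LB2]

end Payoffs

@[fun_prop]
lemma continuous_Epay (M : Fin 2 → Fin 2 → ℝ) (b : Fin 2) : Continuous fun p ↦ Epay M p b := by
  unfold Epay
  fun_prop

lemma csInf_image_eq_of_eqOn {α : Type*} {f : α → ℝ} {s : Set α} {c : ℝ} (hs : s.Nonempty)
    (hf : ∀ x ∈ s, f x = c) : sInf (f '' s) = c := by
  rw [image_congr hf, hs.image_const, csInf_singleton]

lemma csInf_image_Icc_le {f : ℝ → ℝ} (hf : Continuous f) {a b x : ℝ} (hx : x ∈ Icc a b) :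
    sInf (f '' Icc a b) ≤ f x :=
  csInf_le (isCompact_Icc.bddBelow_image hf.continuousOn) (mem_image_of_mem f hx)

/-- The precise Stackelberg value, with leader-favourable tie-breaking, is the supremum of this
set. -/
def stackelbergPayoffs (U L : Fin 2 → Fin 2 → ℝ) : Set ℝ :=
  {v | ∃ p ∈ Icc (0 : ℝ) 1, ∃ b : Fin 2, (∀ b' : Fin 2, Epay U p b' ≤ Epay U p b) ∧ v = Epay L p b}

lemma isGreatest_stackelbergPayoffs_UB1_LB1 : IsGreatest (stackelbergPayoffs UB1 LB1) 4 := by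
  refine ⟨⟨3 / 5, by norm_num, 1, ?_, by norm_num⟩, ?_⟩
  · simp only [Fin.forall_fin_two, Epay_UB1_zero, Epay_UB1_one]
    norm_num
  · rintro v ⟨p, -, b, hbest, rfl⟩
    fin_cases b
    · simp
    · have h := hbest 0
      simp only [Fin.mk_one, Epay_UB1_zero, Epay_UB1_one, Epay_LB1_one] at h ⊢
      linarith

lemma isGreatest_stackelbergPayoffs_UB2_LB2 : IsGreatest (stackelbergPayoffs UB2 LB2) 4 := by
  refine ⟨⟨2 / 5, by norm_num, 0, ?_, by norm_num⟩, ?_⟩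
  · simp only [Fin.forall_fin_two, Epay_UB2_zero, Epay_UB2_one]
    norm_num
  · rintro v ⟨p, -, b, hbest, rfl⟩
    fin_cases b
    · have h := hbest 1
      simp only [Fin.zero_eta, Epay_UB2_zero, Epay_UB2_one, Epay_LB2_zero] at h ⊢
      linarith
    · simp

lemma maximin_of_eqOn_of_le (M : Fin 2 → Fin 2 → ℝ) {b : Fin 2} {c p₀ : ℝ}
    (hconst : ∀ p ∈ Icc (0 : ℝ) 1, Epay M p b = c) (hp₀ : p₀ ∈ Icc (0 : ℝ) 1)
    (hworst : ∀ b' : Fin 2, Epay M p₀ b' ≤ c) {q : Fin 2 → ℝ} (hq : q ∈ stdSimplex ℝ (Fin 2)) :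
    sInf ((fun p ↦ q 0 * Epay M p 0 + q 1 * Epay M p 1) '' Icc (0 : ℝ) 1) ≤
      sInf ((fun p ↦ Epay M p b) '' Icc (0 : ℝ) 1) := by
  obtain ⟨hq_nonneg, hq_sum⟩ := hq
  rw [Fin.sum_univ_two] at hq_sum
  rw [csInf_image_eq_of_eqOn (nonempty_Icc.2 zero_le_one) hconst]
  calc sInf ((fun p ↦ q 0 * Epay M p 0 + q 1 * Epay M p 1) '' Icc (0 : ℝ) 1)
      ≤ q 0 * Epay M p₀ 0 + q 1 * Epay M p₀ 1 := csInf_image_Icc_le (by fun_prop) hp₀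
    _ ≤ q 0 * c + q 1 * c := by
      gcongr
      exacts [hq_nonneg 0, hworst 0, hq_nonneg 1, hworst 1]
    _ = c := by rw [← add_mul, hq_sum, one_mul]

lemma Epay_LB1_one_add_Epay_LB2_zero (p : ℝ) : Epay LB1 p 1 + Epay LB2 p 0 = 10 := by
  simp only [Epay_LB1_one, Epay_LB2_zero]
  ring

/-- The sum of the individual precise Stackelberg values (leader-favorable tie-breaking) of
the two single-follower games is `4 + 4 = 8`, while under the fully ambiguous commitment
`Δ(A_L)` follower 1's maximin response is its second action, follower 2's is its first
action, and the leader then receives `10` for every leader mixed strategy; hence the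
pessimistic fully ambiguous value is `10 > 8`. -/
theorem stmt13 :
    sSup {v : ℝ | ∃ p ∈ Set.Icc (0:ℝ) 1, ∃ b : Fin 2,
        (∀ b' : Fin 2, Epay UB1 p b' ≤ Epay UB1 p b) ∧ v = Epay LB1 p b} = 4 ∧
    sSup {v : ℝ | ∃ p ∈ Set.Icc (0:ℝ) 1, ∃ c : Fin 2,
        (∀ c' : Fin 2, Epay UB2 p c' ≤ Epay UB2 p c) ∧ v = Epay LB2 p c} = 4 ∧
    (∀ q ∈ stdSimplex ℝ (Fin 2),
      sInf ((fun p => q 0 * Epay UB1 p 0 + q 1 * Epay UB1 p 1) '' Set.Icc (0:ℝ) 1) ≤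
      sInf ((fun p => Epay UB1 p 1) '' Set.Icc (0:ℝ) 1)) ∧
    (∀ q ∈ stdSimplex ℝ (Fin 2),
      sInf ((fun p => q 0 * Epay UB2 p 0 + q 1 * Epay UB2 p 1) '' Set.Icc (0:ℝ) 1) ≤
      sInf ((fun p => Epay UB2 p 0) '' Set.Icc (0:ℝ) 1)) ∧
    (∀ p ∈ Set.Icc (0:ℝ) 1, Epay LB1 p 1 + Epay LB2 p 0 = 10) ∧
    sInf ((fun p => Epay LB1 p 1 + Epay LB2 p 0) '' Set.Icc (0:ℝ) 1) = 10 := by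
  refine ⟨isGreatest_stackelbergPayoffs_UB1_LB1.csSup_eq,
    isGreatest_stackelbergPayoffs_UB2_LB2.csSup_eq, fun q hq ↦ ?_, fun q hq ↦ ?_,
    fun p _ ↦ Epay_LB1_one_add_Epay_LB2_zero p,
    csInf_image_eq_of_eqOn (nonempty_Icc.2 zero_le_one)
      fun p _ ↦ Epay_LB1_one_add_Epay_LB2_zero p⟩
  · refine maximin_of_eqOn_of_le UB1 (fun p _ ↦ Epay_UB1_one p) (right_mem_Icc.2 zero_le_one)
      ?_ hq
    simp [Fin.forall_fin_two]
  · refine maximin_of_eqOn_of_le UB2 (fun p _ ↦ Epay_UB2_zero p) (left_mem_Icc.2 zero_le_one)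
      ?_ hq
    simp [Fin.forall_fin_two]
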